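/- arXiv:cs/0605050 — 2 statements merged into one kernel-verified Lean document; each statement's English description precedes it below -/
import Mathlib

section
/- Let G be a transitive nilpotent permutation group on a finite set Ω, p a prime dividing |G|, α ∈ Ω, and let Σ_p = α^{G_p} be the orbit of α under the p-Sylow subgroup G_p. If Δ is any G-block containing α with |Δ| = p^l for some l ≥ 0, then Δ ⊆ Σ_p. -/
/-!
The setwise stabilizer `H` of the block `Δ` is transitive on `Δ`, so `|Δ| = |H : H_α|` is a power
of `p`. As `H` is nilpotent, its Sylow `p`-subgroup `S` is normal, and `|H : S|` is prime to `p`;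
hence `H = S H_α` and `S` is already transitive on `Δ`. Finally `S` is a `p`-subgroup of the
nilpotent group `G`, so it lies in the normal Sylow subgroup `P`, and `Δ = α^S ⊆ α^P`.
-/

open Pointwise

namespace GaloisBlocks

variable {Ω : Type*}

/-- `G ≤ Sym(Ω)` is transitive on `Ω`. -/
def IsTransitive (G : Subgroup (Equiv.Perm Ω)) : Prop :=
  ∀ a b : Ω, ∃ g ∈ G, g a = b

/-- `Δ` is a `G`-block: every `G`-translate of `Δ` equals `Δ` or is disjoint from it. -/
def IsBlock (G : Subgroup (Equiv.Perm Ω)) (Δ : Set Ω) : Prop :=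
  ∀ g ∈ G, g • Δ = Δ ∨ Disjoint (g • Δ) Δ

/-- The setwise stabilizer `G_Δ` of `Δ` in `G`. -/
def stab (G : Subgroup (Equiv.Perm Ω)) (Δ : Set Ω) : Subgroup (Equiv.Perm Ω) :=
  G ⊓ MulAction.stabilizer (Equiv.Perm Ω) Δ

/-- The point stabilizer `G_α`. -/
def stabPt (G : Subgroup (Equiv.Perm Ω)) (α : Ω) : Subgroup (Equiv.Perm Ω) :=
  G ⊓ MulAction.stabilizer (Equiv.Perm Ω) α

/-- The `Δ`-block system of `S`: all `G`-translates of `Δ` contained in `S`. -/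
def blockSystem (G : Subgroup (Equiv.Perm Ω)) (S Δ : Set Ω) : Set (Set Ω) :=
  {Υ | (∃ g ∈ G, Υ = g • Δ) ∧ Υ ⊆ S}

/-- `G(S/Δ)`: elements of `G_S` fixing setwise every block of the `Δ`-block
system of `S`. -/
def blockKer (G : Subgroup (Equiv.Perm Ω)) (S Δ : Set Ω) : Subgroup (Equiv.Perm Ω) :=
  stab G S ⊓ ⨅ Υ ∈ blockSystem G S Δ, MulAction.stabilizer (Equiv.Perm Ω) Υ

/-- `G^Δ = G(Ω/Δ)`: the kernel of the action of `G` on the block system of `Δ`. -/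
def fullKer (G : Subgroup (Equiv.Perm Ω)) (Δ : Set Ω) : Subgroup (Equiv.Perm Ω) :=
  blockKer G Set.univ Δ

/-- The orbit `α^N`. -/
def orbitOf (N : Subgroup (Equiv.Perm Ω)) (α : Ω) : Set Ω :=
  {β | ∃ g ∈ N, g α = β}

/-- `G` is primitive: transitive with only trivial blocks. -/
def IsPrimitive (G : Subgroup (Equiv.Perm Ω)) : Prop :=
  IsTransitive G ∧ ∀ Δ : Set Ω, IsBlock G Δ → Δ.Subsingleton ∨ Δ = Set.univ

/-- `Δ` is a maximal `G`-subblock of `S`. -/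
def IsMaximalSubblock (G : Subgroup (Equiv.Perm Ω)) (Δ S : Set Ω) : Prop :=
  IsBlock G Δ ∧ IsBlock G S ∧ Δ ⊂ S ∧
    ∀ Υ : Set Ω, IsBlock G Υ → ¬(Δ ⊂ Υ ∧ Υ ⊂ S)

/-- `P` is a `p`-Sylow subgroup of `G`. -/
def IsSylowOf (p : ℕ) (P G : Subgroup (Equiv.Perm Ω)) : Prop :=
  P ≤ G ∧ IsPGroup p ↥P ∧
    ∀ Q : Subgroup (Equiv.Perm Ω), Q ≤ G → IsPGroup p ↥Q → P ≤ Q → Q = P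

end GaloisBlocks

theorem MulAction.orbit_subgroup_eq_of_coprime_index {H X : Type*} [Group H] [MulAction H X]
    (S : Subgroup H) [S.Normal] (x : X) (hS : S.index.Coprime (MulAction.orbit H x).ncard) :
    MulAction.orbit S x = MulAction.orbit H x := by
  rw [← MulAction.index_stabilizer] at hS
  have hsup : S ⊔ MulAction.stabilizer H x = ⊤ :=
    Subgroup.index_eq_one.mp <| Nat.eq_one_of_dvd_coprimes hS
      (Subgroup.index_dvd_of_le le_sup_left) (Subgroup.index_dvd_of_le le_sup_right)
  refine (MulAction.orbit_subgroup_subset S x).antisymm ?_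
  rintro _ ⟨h, rfl⟩
  obtain ⟨s, hs, k, hk, rfl⟩ :=
    Subgroup.mem_sup_of_normal_left.mp (hsup ▸ Subgroup.mem_top h)
  exact ⟨⟨s, hs⟩, by simp only [mul_smul, MulAction.mem_stabilizer_iff.mp hk]; rfl⟩

theorem Group.isNilpotent_of_le {K : Type*} [Group K] {H L : Subgroup K} (hHL : H ≤ L)
    [Group.IsNilpotent L] : Group.IsNilpotent H :=
  Group.nilpotent_of_mulEquiv (Subgroup.subgroupOfEquivOfLe hHL)

namespace GaloisBlocks

variable {Ω : Type*}

section

variable {G P : Subgroup (Equiv.Perm Ω)} {Δ : Set Ω} {α : Ω}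

theorem IsBlock.orbit_stab_eq (hG : IsTransitive G) (hΔ : IsBlock G Δ) (hα : α ∈ Δ) :
    MulAction.orbit (stab G Δ) α = Δ := by
  ext β
  constructor
  · rintro ⟨⟨h, hh⟩, rfl⟩
    have hhΔ : h • Δ = Δ := (Subgroup.mem_inf.mp hh).2
    show h • α ∈ Δ
    simpa only [hhΔ] using Set.smul_mem_smul_set (a := h) hα
  · intro hβ
    obtain ⟨g, hg, rfl⟩ := hG α β
    have hgΔ : g • Δ = Δ := (hΔ g hg).resolve_right fun hdisj =>
      Set.disjoint_left.mp hdisj (Set.smul_mem_smul_set hα) hβ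
    exact ⟨⟨g, Subgroup.mem_inf.mpr ⟨hg, hgΔ⟩⟩, rfl⟩

variable {p : ℕ}

def IsSylowOf.toSylow (hP : IsSylowOf p P G) : Sylow p G where
  toSubgroup := P.subgroupOf G
  isPGroup' := hP.2.1.of_equiv (Subgroup.subgroupOfEquivOfLe hP.1).symm
  is_maximal' {Q} hQ hPQ := by
    have hQP : Q.map G.subtype = P := hP.2.2 _ (Subgroup.map_subtype_le Q) (hQ.map _) <| by
      simpa [Subgroup.subgroupOf_map_subtype, inf_of_le_left hP.1] using
        Subgroup.map_mono (f := G.subtype) hPQ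
    rw [← hQP, Subgroup.subgroupOf, Subgroup.comap_map_eq_self_of_injective G.subtype_injective]

theorem IsSylowOf.le_of_isPGroup [Finite G] [Group.IsNilpotent G] [Fact p.Prime]
    (hP : IsSylowOf p P G) {Q : Subgroup (Equiv.Perm Ω)} (hQG : Q ≤ G) (hQ : IsPGroup p Q) :
    Q ≤ P := by
  have hQ' : IsPGroup p (Q.subgroupOf G) := hQ.of_equiv (Subgroup.subgroupOfEquivOfLe hQG).symm
  have hQP : Q.subgroupOf G ≤ P.subgroupOf G :=
    le_sup_left.trans (hP.toSylow.is_maximal'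
      (hQ'.to_sup_of_normal_right hP.toSylow.isPGroup') le_sup_right).le
  simpa [Subgroup.subgroupOf_map_subtype, inf_of_le_left hQG, inf_of_le_left hP.1] using
    Subgroup.map_mono (f := G.subtype) hQP

end

theorem stmt6_general [Fintype Ω] (G P : Subgroup (Equiv.Perm Ω)) (hG : IsTransitive G)
    (hnil : Group.IsNilpotent ↥G) (p : ℕ) (hp : p.Prime)
    (hP : IsSylowOf p P G) (α : Ω)
    (Δ : Set Ω) (hΔ : IsBlock G Δ) (hα : α ∈ Δ) (l : ℕ)
    (hcard : Δ.ncard = p ^ l) :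
    Δ ⊆ orbitOf P α := by
  have : Fact p.Prime := ⟨hp⟩
  have : Group.IsNilpotent (stab G Δ) := Group.isNilpotent_of_le inf_le_left
  obtain ⟨S⟩ : Nonempty (Sylow p (stab G Δ)) := inferInstance
  have horbit := hΔ.orbit_stab_eq hG hα
  have hSΔ : MulAction.orbit S α = Δ := by
    refine (MulAction.orbit_subgroup_eq_of_coprime_index _ α ?_).trans horbit
    rw [horbit, hcard]
    exact (hp.coprime_iff_not_dvd.mpr S.not_dvd_index).symm.pow_right l
  have hSP : (S : Subgroup (stab G Δ)).map (stab G Δ).subtype ≤ P :=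
    hP.le_of_isPGroup ((Subgroup.map_subtype_le _).trans inf_le_left) (S.isPGroup'.map _)
  rw [← hSΔ]
  rintro _ ⟨s, rfl⟩
  exact ⟨s, hSP ⟨s, s.2, rfl⟩, rfl⟩

/-- Any block containing `α` of `p`-power size is contained in `Σ_p = α^{G_p}`. -/
theorem stmt6 [Fintype Ω] (G P : Subgroup (Equiv.Perm Ω)) (hG : IsTransitive G)
    (hnil : Group.IsNilpotent ↥G) (p : ℕ) (hp : p.Prime)
    (hpG : p ∣ Nat.card ↥G) (hP : IsSylowOf p P G) (α : Ω)
    (Δ : Set Ω) (hΔ : IsBlock G Δ) (hα : α ∈ Δ) (l : ℕ)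
    (hcard : Δ.ncard = p ^ l) :
    Δ ⊆ orbitOf P α :=
  stmt6_general G P hG hnil p hp hP α Δ hΔ hα l hcard

end GaloisBlocks
end

section
/- Let G be a transitive permutation group on a finite set Ω and let Δ ⊆ Σ be G-blocks. Then the quotient G^Σ/G^Δ embeds into a finite direct power of G_Σ/G(Σ/Δ), where G^Δ = G(Ω/Δ) and G^Σ = G(Ω/Σ) are the kernels of the actions of G on the respective block systems of Ω. -/
/-!
Conjugation by `g ∈ G` maps `G^S` into `G_S`, and `x ∈ G^S` fixes the translate `g⁻¹ • Δ`
iff `g x g⁻¹` fixes `Δ`, which is one of the blocks of the `Δ`-system of `S` since `Δ ⊆ S`.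
Hence `x ↦ (g x g⁻¹ · G(S/Δ))_{g ∈ G}` is a homomorphism `G^S → (G_S/G(S/Δ))^|G|` with
kernel `G^Δ`.
-/

open Pointwise

namespace GaloisBlocks

variable {Ω : Type*}

section

variable (G : Subgroup (Equiv.Perm Ω))

lemma mem_fullKer_iff (S : Set Ω) (x : Equiv.Perm Ω) :
    x ∈ fullKer G S ↔ x ∈ G ∧ ∀ g ∈ G, x • (g • S) = g • S := by
  simp only [fullKer, blockKer, stab, blockSystem, Subgroup.mem_inf, Subgroup.mem_iInf,
    MulAction.mem_stabilizer_iff, Set.mem_ofPred_eq, Set.smul_set_univ, and_true,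
    Set.subset_univ]
  constructor
  · rintro ⟨hG, h⟩
    exact ⟨hG, fun g hg => h (g • S) ⟨g, hg, rfl⟩⟩
  · rintro ⟨hG, h⟩
    exact ⟨hG, by rintro Υ ⟨g, hg, rfl⟩; exact h g hg⟩

lemma mem_blockKer_iff (S Δ : Set Ω) (x : Equiv.Perm Ω) :
    x ∈ blockKer G S Δ ↔ (x ∈ G ∧ x • S = S) ∧
      ∀ g ∈ G, g • Δ ⊆ S → x • (g • Δ) = g • Δ := by
  simp only [blockKer, stab, blockSystem, Subgroup.mem_inf, Subgroup.mem_iInf,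
    MulAction.mem_stabilizer_iff, Set.mem_ofPred_eq]
  constructor
  · rintro ⟨hs, h⟩
    exact ⟨hs, fun g hg hss => h (g • Δ) ⟨⟨g, hg, rfl⟩, hss⟩⟩
  · rintro ⟨hs, h⟩
    exact ⟨hs, by rintro Υ ⟨⟨g, hg, rfl⟩, hss⟩; exact h g hg hss⟩

lemma fullKer_le_stab (S : Set Ω) : fullKer G S ≤ stab G S := fun x hx => by
  obtain ⟨hxG, hx⟩ := (mem_fullKer_iff G S x).1 hx
  simpa [stab, hxG] using hx 1 G.one_mem

lemma conj_mem_fullKer (S : Set Ω) {x g : Equiv.Perm Ω} (hx : x ∈ fullKer G S)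
    (hg : g ∈ G) : g * x * g⁻¹ ∈ fullKer G S := by
  obtain ⟨hxG, hx⟩ := (mem_fullKer_iff G S x).1 hx
  refine (mem_fullKer_iff G S _).2 ⟨G.mul_mem (G.mul_mem hg hxG) (G.inv_mem hg), fun k hk => ?_⟩
  rw [mul_smul, mul_smul, ← mul_smul g⁻¹ k, hx _ (G.mul_mem (G.inv_mem hg) hk), ← mul_smul,
    mul_inv_cancel_left]

lemma mem_fullKer_iff_forall_conj_mem_blockKer {Δ S : Set Ω} (hsub : Δ ⊆ S)
    {x : Equiv.Perm Ω} (hx : x ∈ fullKer G S) :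
    x ∈ fullKer G Δ ↔ ∀ g ∈ G, g * x * g⁻¹ ∈ blockKer G S Δ := by
  constructor
  · intro hxΔ g hg
    have hconj := conj_mem_fullKer G Δ hxΔ hg
    refine (mem_blockKer_iff G S Δ _).2
      ⟨fullKer_le_stab G S (conj_mem_fullKer G S hx hg), fun h hh _ => ?_⟩
    exact ((mem_fullKer_iff G Δ _).1 hconj).2 h hh
  · intro h
    refine (mem_fullKer_iff G Δ x).2 ⟨((mem_fullKer_iff G S x).1 hx).1, fun k hk => ?_⟩
    have hfix := ((mem_blockKer_iff G S Δ _).1 (h k⁻¹ (G.inv_mem hk))).2 1 G.one_mem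
      (by rwa [one_smul])
    rw [one_smul, inv_inv, mul_smul, mul_smul, inv_smul_eq_iff] at hfix
    exact hfix

def conjToStab (S : Set Ω) (g : G) : fullKer G S →* stab G S :=
  ((MulAut.conj (g : Equiv.Perm Ω)).toMonoidHom.comp (fullKer G S).subtype).codRestrict
    (stab G S) fun x => fullKer_le_stab G S (conj_mem_fullKer G S x.2 g.2)

@[simp]
lemma coe_conjToStab_apply (S : Set Ω) (g : G) (x : fullKer G S) :
    (conjToStab G S g x : Equiv.Perm Ω) = g * x * (g : Equiv.Perm Ω)⁻¹ := rfl

end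

theorem stmt15_general [Fintype Ω] (G : Subgroup (Equiv.Perm Ω))
    (Δ S : Set Ω) (hsub : Δ ⊆ S)
    [hN : ((blockKer G S Δ).subgroupOf (stab G S)).Normal] :
    ∃ (l : ℕ)
      (φ : ↥(fullKer G S) →*
        (Fin l → ↥(stab G S) ⧸ (blockKer G S Δ).subgroupOf (stab G S))),
      φ.ker = (fullKer G Δ).subgroupOf (fullKer G S) := by
  let e := (Finite.equivFin G).symm
  refine ⟨Nat.card G, MonoidHom.pi fun i =>
    (QuotientGroup.mk' _).comp (conjToStab G S (e i)), ?_⟩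
  ext x
  rw [MonoidHom.mem_ker, Subgroup.mem_subgroupOf,
    mem_fullKer_iff_forall_conj_mem_blockKer G hsub x.2, funext_iff, e.forall_congr_left,
    Subtype.forall]
  refine forall₂_congr fun g hg => ?_
  rw [MonoidHom.pi_apply, MonoidHom.comp_apply, e.apply_symm_apply, Pi.one_apply,
    QuotientGroup.mk'_apply, QuotientGroup.eq_one_iff, Subgroup.mem_subgroupOf, coe_conjToStab_apply]

/-- `G^S/G^Δ` embeds into a finite direct power of `G_S/G(S/Δ)`. -/
theorem stmt15 [Fintype Ω] (G : Subgroup (Equiv.Perm Ω)) (hG : IsTransitive G)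
    (Δ S : Set Ω) (hΔ : IsBlock G Δ) (hS : IsBlock G S) (hsub : Δ ⊆ S)
    [hN : ((blockKer G S Δ).subgroupOf (stab G S)).Normal] :
    ∃ (l : ℕ)
      (φ : ↥(fullKer G S) →*
        (Fin l → ↥(stab G S) ⧸ (blockKer G S Δ).subgroupOf (stab G S))),
      φ.ker = (fullKer G Δ).subgroupOf (fullKer G S) :=
  stmt15_general G Δ S hsub (hN := hN)

end GaloisBlocks
end
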